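/- arXiv:1803.09686 — 4 statements merged into one kernel-verified Lean document; each statement's English description precedes it below -/
import Mathlib

section
/- Let G and H be graphs, and let π : V(G) → V(H) be a weak covering map with tame fibres and the disjoint tree-lifting property. Then there is a choice of integer r ≥ 1 such that for every x ∈ V(G), the set Z = Z(x,r), defined as the connected component of x in π⁻¹(B_r(π(x))) ∩ B_{3r}(x) (endowed with the graph structure induced by G), satisfies: for every vertex u of H at distance exactly r+1 from π(x), the fibre π⁻¹({u}) contains at least two vertices adjacent in G to Z. -/
open MeasureTheory

namespace Percolation

variable {V : Type*} {W : Type*}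

/-- The ball of radius `k` around `x` for the graph distance. -/
def ball (G : SimpleGraph V) (x : V) (k : ℕ) : Set V := {y | G.dist x y ≤ k}

/-- The sphere of radius `k` around `x` for the graph distance. -/
def sphere (G : SimpleGraph V) (x : V) (k : ℕ) : Set V := {y | G.dist x y = k}

/-- A graph is locally finite if every vertex has finitely many neighbours. -/
def LocallyFinite' (G : SimpleGraph V) : Prop := ∀ v : V, (G.neighborSet v).Finite

/-- A graph has bounded degree if there is a uniform finite bound on the number of
neighbours of any vertex. -/
def BoundedDegree (G : SimpleGraph V) : Prop :=
  ∃ D : ℕ, ∀ v : V, (G.neighborSet v).Finite ∧ (G.neighborSet v).ncard ≤ D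

/-- A graph is quasi-transitive if the action of its automorphism group on its vertices
has finitely many orbits. -/
def QuasiTransitive (G : SimpleGraph V) : Prop :=
  ∃ S : Set V, S.Finite ∧ ∀ v : V, ∃ s ∈ S, ∃ φ : G ≃g G, φ s = v

/-- The graph of `ω`-open edges of a percolation configuration `ω` on `G`. -/
def openGraph (G : SimpleGraph V) (ω : G.edgeSet → Bool) : SimpleGraph V where
  Adj x y := ∃ h : G.Adj x y, ω ⟨s(x, y), (SimpleGraph.mem_edgeSet G).mpr h⟩ = true
  symm := by
    constructor
    rintro x y ⟨h, hw⟩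
    refine ⟨h.symm, ?_⟩
    have heq : (⟨s(y, x), (SimpleGraph.mem_edgeSet G).mpr h.symm⟩ : G.edgeSet)
        = ⟨s(x, y), (SimpleGraph.mem_edgeSet G).mpr h⟩ := Subtype.ext (Sym2.eq_swap)
    rw [heq]; exact hw
  loopless := by constructor; rintro x ⟨h, -⟩; exact G.loopless.irrefl x h

/-- The open cluster of the vertex `x` in the configuration `ω`. -/
def cluster (G : SimpleGraph V) (ω : G.edgeSet → Bool) (x : V) : Set V :=
  {y | (openGraph G ω).Reachable x y}

/-- The open cluster of a set `A` of vertices in the configuration `ω`. -/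
def clusterOf (G : SimpleGraph V) (ω : G.edgeSet → Bool) (A : Set V) : Set V :=
  {y | ∃ x ∈ A, (openGraph G ω).Reachable x y}

/-- The event that some open path intersects both `A` and `B`. -/
def connectedEvent (G : SimpleGraph V) (A B : Set V) : Set (G.edgeSet → Bool) :=
  {ω | ∃ a ∈ A, ∃ b ∈ B, (openGraph G ω).Reachable a b}

/-- `μ` is the Bernoulli product measure `⊗_{i ∈ ι} Ber(p)` on `ι → Bool`:
a probability measure giving every finite cylinder event its product probability. -/
def IsBernoulliProduct {ι : Type*} (p : ℝ) (μ : Measure (ι → Bool)) : Prop :=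
  IsProbabilityMeasure μ ∧
    ∀ (t : Finset ι) (f : ι → Bool),
      μ {ω | ∀ i ∈ t, ω i = f i} =
        ∏ i ∈ t, ENNReal.ofReal (if f i then p else 1 - p)

/-- `μ` is the product measure `Ber(p)^{⊗ι} ⊗ Ber(s)^{⊗κ}` on `(ι → Bool) × (κ → Bool)`. -/
def IsBernoulliPair {ι κ : Type*} (p s : ℝ)
    (μ : Measure ((ι → Bool) × (κ → Bool))) : Prop :=
  IsProbabilityMeasure μ ∧
    ∀ (t : Finset ι) (u : Finset κ) (f : ι → Bool) (g : κ → Bool),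
      μ {c | (∀ i ∈ t, c.1 i = f i) ∧ (∀ j ∈ u, c.2 j = g j)} =
        (∏ i ∈ t, ENNReal.ofReal (if f i then p else 1 - p)) *
          ∏ j ∈ u, ENNReal.ofReal (if g j then s else 1 - s)

/-- The critical parameter `p_c` of a graph: the infimum of those `p ∈ [0,1]` for which
Bernoulli(p) bond percolation produces an infinite cluster with positive probability
(with the convention that it equals `1` when no such `p` exists). -/
noncomputable def pc (G : SimpleGraph V) : ℝ :=
  sInf ({p : ℝ | p ∈ Set.Icc (0 : ℝ) 1 ∧
    ∀ μ : Measure (G.edgeSet → Bool), IsBernoulliProduct p μ →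
      0 < μ {ω | ∃ x : V, (cluster G ω x).Infinite}} ∪ {1})

/-- The uniqueness parameter `p_u` of a graph: the infimum of those `p ∈ [0,1]` for which
Bernoulli(p) bond percolation produces exactly one infinite cluster almost surely
(with the convention that it equals `1` when no such `p` exists). -/
noncomputable def pu (G : SimpleGraph V) : ℝ :=
  sInf ({p : ℝ | p ∈ Set.Icc (0 : ℝ) 1 ∧
    ∀ μ : Measure (G.edgeSet → Bool), IsBernoulliProduct p μ →
      μ {ω | ∃! C : (openGraph G ω).ConnectedComponent, C.supp.Infinite} = 1} ∪ {1})

/-- A weak covering map: 1-Lipschitz for the graph distances, and every edge at `π x`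
lifts to an edge at `x`. -/
structure IsWeakCover (G : SimpleGraph V) (H : SimpleGraph W) (π : V → W) : Prop where
  lipschitz : ∀ x y : V, H.dist (π x) (π y) ≤ G.dist x y
  lift : ∀ x : V, ∀ u : W, H.Adj (π x) u → ∃ y : V, G.Adj x y ∧ π y = u

/-- A strong covering map: 1-Lipschitz for the graph distances, and every edge at `π x`
lifts to a *unique* edge at `x`. -/
structure IsStrongCover (G : SimpleGraph V) (H : SimpleGraph W) (π : V → W) : Prop where
  lipschitz : ∀ x y : V, H.dist (π x) (π y) ≤ G.dist x y
  lift : ∀ x : V, ∀ u : W, H.Adj (π x) u → ∃! y : V, G.Adj x y ∧ π y = u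

/-- `π` has tame fibres: for some `R`, every vertex has another vertex of its fibre
within distance `R`. -/
def TameFibres (G : SimpleGraph V) (π : V → W) : Prop :=
  ∃ R : ℕ, ∀ x : V, ∃ y : V, π x = π y ∧ 0 < G.dist x y ∧ G.dist x y ≤ R

/-- `π` has bounded fibres: fibres have uniformly bounded diameter. -/
def BoundedFibres (G : SimpleGraph V) (π : V → W) : Prop :=
  ∃ K : ℕ, ∀ x y : V, π x = π y → G.dist x y ≤ K

/-- `T'` is a lift of the subtree `T` through `π`: a subtree of `G` such that `π` induces
a graph isomorphism from `T'` onto `T`. -/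
def IsLift (G : SimpleGraph V) (H : SimpleGraph W) (π : V → W)
    (T : H.Subgraph) (T' : G.Subgraph) : Prop :=
  T'.coe.IsTree ∧ Set.BijOn π T'.verts T.verts ∧
    ∀ x y : V, x ∈ T'.verts → y ∈ T'.verts → (T'.Adj x y ↔ T.Adj (π x) (π y))

/-- The disjoint tree-lifting property of `π`. -/
def HasDisjointTreeLifting (G : SimpleGraph V) (H : SimpleGraph W) (π : V → W) : Prop :=
  ∀ T : H.Subgraph, T.coe.IsTree →
    ∀ x y : V, x ≠ y → π x = π y → π x ∈ T.verts →
      ∃ Tx Ty : G.Subgraph, IsLift G H π T Tx ∧ IsLift G H π T Ty ∧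
        x ∈ Tx.verts ∧ y ∈ Ty.verts ∧ Disjoint Tx.verts Ty.verts

/-- All edges with both endpoints in the ball `B_r(u)` are `ω`-open. -/
def fullyOpen (H : SimpleGraph V) (r : ℕ) (ω : H.edgeSet → Bool) (u : V) : Prop :=
  ∀ e : H.edgeSet, (∀ z ∈ (e : Sym2 V), H.dist u z ≤ r) → ω e = true

/-- The enhancement step: add all vertices `v` at distance exactly `r+1` from a vertex
`u` of `S` whose `r`-ball is fully open and with `α u = 1`. -/
def enhance (H : SimpleGraph V) (r : ℕ) (ω : H.edgeSet → Bool) (α : V → Bool)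
    (S : Set V) : Set V :=
  S ∪ {v | ∃ u ∈ S, H.dist u v = r + 1 ∧ fullyOpen H r ω u ∧ α u = true}

/-- The sequence `C_n` of the enhanced exploration started from `A`: odd steps spread
along open clusters, even steps perform the enhancement. -/
def enhSeq (H : SimpleGraph V) (r : ℕ) (ω : H.edgeSet → Bool) (α : V → Bool)
    (A : Set V) : ℕ → Set V
  | 0 => A
  | n + 1 =>
      if n % 2 = 0 then clusterOf H ω (enhSeq H r ω α A n)
      else enhance H r ω α (enhSeq H r ω α A n)

/-- The enhanced cluster `C_A(ω, α)`. -/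
def enhCluster (H : SimpleGraph V) (r : ℕ) (ω : H.edgeSet → Bool) (α : V → Bool)
    (A : Set V) : Set V := ⋃ n, enhSeq H r ω α A n

open scoped Classical in
/-- Set the state of the edge `e` to `b`. -/
noncomputable def flipE (H : SimpleGraph V) (ω : H.edgeSet → Bool) (e : H.edgeSet)
    (b : Bool) : H.edgeSet → Bool := Function.update ω e b

open scoped Classical in
/-- Set the state of the vertex `v` to `b`. -/
noncomputable def flipV (α : V → Bool) (v : V) (b : Bool) : V → Bool :=
  Function.update α v b

/-- The edge `e` is p-pivotal for the event `E` in the configuration `c`. -/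
def PPivotal (H : SimpleGraph V) (E : Set ((H.edgeSet → Bool) × (V → Bool)))
    (e : H.edgeSet) (c : (H.edgeSet → Bool) × (V → Bool)) : Prop :=
  (flipE H c.1 e true, c.2) ∈ E ∧ (flipE H c.1 e false, c.2) ∉ E

/-- The vertex `z` is s-pivotal for the event `E` in the configuration `c`. -/
def SPivotal (H : SimpleGraph V) (E : Set ((H.edgeSet → Bool) × (V → Bool)))
    (z : V) (c : (H.edgeSet → Bool) × (V → Bool)) : Prop :=
  (c.1, flipV c.2 z true) ∈ E ∧ (c.1, flipV c.2 z false) ∉ E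

/-- For an edge `e = {x,y}`, the set `B_R(e) = B_R(x) ∪ B_R(y)`. -/
def edgeBall (H : SimpleGraph V) (e : H.edgeSet) (R : ℕ) : Set V :=
  {z | ∃ w ∈ (e : Sym2 V), H.dist w z ≤ R}

/-- The connected component of `x` inside the subgraph of `G` induced by `S`
(as a subset of the vertices of `G`). -/
def compIn (G : SimpleGraph V) (S : Set V) (x : V) : Set V :=
  {y | ∃ w : G.Walk x y, ∀ z ∈ w.support, z ∈ S}

/-- The quotient graph `G/Γ`: vertices are the orbits, two distinct orbits being adjacent
iff some edge of `G` intersects both. -/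
def quotientGraph (G : SimpleGraph V) (Γ : Type*) [Group Γ] [MulAction Γ V] :
    SimpleGraph (Quotient (MulAction.orbitRel Γ V)) where
  Adj a b := a ≠ b ∧ ∃ x y : V, G.Adj x y ∧
      Quotient.mk (MulAction.orbitRel Γ V) x = a ∧ Quotient.mk (MulAction.orbitRel Γ V) y = b
  symm := by constructor; rintro a b ⟨hne, x, y, hxy, hx, hy⟩; exact ⟨hne.symm, y, x, hxy.symm, hy, hx⟩
  loopless := by constructor; rintro a ⟨hne, -⟩; exact hne rfl

open scoped Classical in
/-- The configuration `ω_L`: agrees with `ω` on edges inside `B_L(o)`, closed elsewhere. -/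
noncomputable def truncE (H : SimpleGraph V) (o : V) (L : ℕ) (ω : H.edgeSet → Bool) :
    H.edgeSet → Bool :=
  fun e => if ∀ z ∈ (e : Sym2 V), H.dist o z ≤ L then ω e else false

/-- The configuration `α_L`: agrees with `α` on vertices of `B_L(o)`, `0` elsewhere. -/
noncomputable def truncV (H : SimpleGraph V) (o : V) (L : ℕ) (α : V → Bool) : V → Bool :=
  fun v => if H.dist o v ≤ L then α v else false

/-- `B` is `r`-nice: finite, non-empty, and every vertex outside of `B` belongs to some
`r`-ball avoiding `B`. -/
def RNice (H : SimpleGraph V) (r : ℕ) (B : Set V) : Prop :=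
  B.Finite ∧ B.Nonempty ∧ ∀ u ∉ B, ∃ v : V, u ∈ ball H v r ∧ ∀ w ∈ ball H v r, w ∉ B

/-!
Take `r = max R 1` for the tame-fibre constant `R`, so that every `x` has a partner `x' ≠ x`
in its fibre with `d(x, x') ≤ r`. A geodesic from `π x` to `u` is a path of length `r + 1`, hence
spans a subtree of `H`; its disjoint lifts through `x` and `x'` contain two distinct preimages
of `u`, each adjacent to the lift of the penultimate vertex. Since `π` is 1-Lipschitz, the lifted
walks of length `r` (preceded, for `x'`, by a geodesic from `x` to `x'`) stay inside
`π⁻¹(B_r(π x)) ∩ B_{2r}(x)`.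
-/

end Percolation

namespace SimpleGraph

variable {V : Type*} {G : SimpleGraph V}

theorem Walk.IsPath.isAcyclic_spanningCoe_toSubgraph {u v : V} {p : G.Walk u v}
    (hp : p.IsPath) : p.toSubgraph.spanningCoe.IsAcyclic := by
  induction p with
  | nil => exact isAcyclic_bot.anti nofun
  | @cons a b c h p ih =>
    rw [cons_isPath_iff] at hp
    have hunreach : ¬ p.toSubgraph.spanningCoe.Reachable a b := by
      rintro ⟨q⟩
      cases q with
      | nil => exact hp.2 p.start_mem_support
      | cons had _ => exact hp.2 (p.mem_verts_toSubgraph.mp had.fst_mem)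
    rw [Walk.toSubgraph, Subgraph.sup_spanningCoe, Subgraph.spanningCoe_subgraphOfAdj, sup_comm]
    exact (ih hp.1).sup_edge_of_not_reachable hunreach

theorem Walk.IsPath.isTree_coe_toSubgraph {u v : V} {p : G.Walk u v} (hp : p.IsPath) :
    p.toSubgraph.coe.IsTree :=
  ⟨Subgraph.connected_iff'.mp p.toSubgraph_connected,
    hp.isAcyclic_spanningCoe_toSubgraph.embedding p.toSubgraph.coeEmbeddingSpanningCoe⟩

theorem Walk.dist_le_of_mem_support {u v w : V} (p : G.Walk u v) (hw : w ∈ p.support) :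
    G.dist u w ≤ p.length := by
  classical exact (dist_le (p.takeUntil w hw)).trans (p.length_takeUntil_le_length hw)

end SimpleGraph

namespace Percolation

open SimpleGraph

variable {V W : Type*} {G : SimpleGraph V} {H : SimpleGraph W} {π : V → W}

theorem IsLift.exists_walk {T : H.Subgraph} {T' : G.Subgraph} (hL : IsLift G H π T T')
    {a b : W} (p : H.Walk a b) (hp : p.toSubgraph ≤ T) {x : V} (hx : x ∈ T'.verts)
    (hxa : π x = a) :
    ∃ (y : V) (q : G.Walk x y), y ∈ T'.verts ∧ π y = b ∧ q.length = p.length := by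
  induction p generalizing x with
  | nil => exact ⟨x, .nil, hx, hxa, rfl⟩
  | @cons a c b h p ih =>
    rw [Walk.toSubgraph, sup_le_iff] at hp
    have hTac : T.Adj a c := hp.1.2 (by simp)
    obtain ⟨x₁, hx₁, hx₁c⟩ := hL.2.1.surjOn hTac.snd_mem
    have hT'adj : T'.Adj x x₁ := (hL.2.2 x x₁ hx hx₁).mpr (by rwa [hxa, hx₁c])
    obtain ⟨y, q, hy, hyb, hq⟩ := ih hp.2 hx₁ hx₁c
    exact ⟨y, .cons hT'adj.adj_sub q, hy, hyb, by simp [hq]⟩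

theorem mem_compIn_of_walks (hπ : IsWeakCover G H π) {r : ℕ} {x x' z : V} (hx' : π x' = π x)
    (g : G.Walk x x') (hg : g.length ≤ r) (q : G.Walk x' z) (hq : q.length ≤ r) :
    z ∈ compIn G (π ⁻¹' ball H (π x) r ∩ ball G x (3 * r)) x := by
  refine ⟨g.append q, fun w hw => ?_⟩
  have hxw : G.dist x w ≤ 2 * r := by
    have := (g.append q).dist_le_of_mem_support hw
    rw [Walk.length_append] at this
    omega
  rcases (Walk.mem_support_append_iff g q).mp hw with hw | hw
  · have hπw := (hπ.lipschitz x w).trans (g.dist_le_of_mem_support hw)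
    exact ⟨show H.dist (π x) (π w) ≤ r by omega, show G.dist x w ≤ 3 * r by omega⟩
  · have hπw := (hπ.lipschitz x' w).trans (q.dist_le_of_mem_support hw)
    rw [hx'] at hπw
    exact ⟨show H.dist (π x) (π w) ≤ r by omega, show G.dist x w ≤ 3 * r by omega⟩

theorem exists_adj_mem_compIn (hπ : IsWeakCover G H π) {r : ℕ} {x x' y : V}
    (hx' : π x' = π x) (g : G.Walk x x') (hg : g.length ≤ r) (q : G.Walk x' y)
    (hq : q.length = r + 1) :
    ∃ z ∈ compIn G (π ⁻¹' ball H (π x) r ∩ ball G x (3 * r)) x, G.Adj z y := by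
  have hq' : ¬ q.Nil := by rw [← Walk.length_eq_zero_iff]; omega
  exact ⟨q.penultimate, mem_compIn_of_walks hπ hx' g hg q.dropLast (by simp [hq]),
    q.adj_penultimate hq'⟩

theorem exists_pattern_radius_general {V W : Type*} (G : SimpleGraph V) (H : SimpleGraph W)
    (π : V → W) (hπ : IsWeakCover G H π)
    (htame : TameFibres G π) (hdtl : HasDisjointTreeLifting G H π) :
    ∃ r : ℕ, 1 ≤ r ∧ ∀ x : V, ∀ u : W, H.dist (π x) u = r + 1 →
      ∃ y₁ y₂ : V, y₁ ≠ y₂ ∧ π y₁ = u ∧ π y₂ = u ∧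
        (∃ z₁ ∈ compIn G (π ⁻¹' ball H (π x) r ∩ ball G x (3 * r)) x, G.Adj z₁ y₁) ∧
        (∃ z₂ ∈ compIn G (π ⁻¹' ball H (π x) r ∩ ball G x (3 * r)) x, G.Adj z₂ y₂) := by
  obtain ⟨R, hR⟩ := htame
  refine ⟨max R 1, le_max_right R 1, fun x u hu => ?_⟩
  obtain ⟨x', hfib, hpos, hxx'⟩ := hR x
  obtain ⟨P, hP⟩ :=
    (Reachable.of_dist_ne_zero (by omega : H.dist (π x) u ≠ 0)).exists_walk_length_eq_dist
  obtain ⟨Tx, Ty, hTx, hTy, hxTx, hx'Ty, hdisj⟩ :=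
    hdtl P.toSubgraph (P.isPath_of_length_eq_dist hP).isTree_coe_toSubgraph x x'
      (fun h => by simp [h] at hpos) hfib P.start_mem_verts_toSubgraph
  obtain ⟨y₁, Q₁, hy₁T, hy₁, hQ₁⟩ := hTx.exists_walk P le_rfl hxTx rfl
  obtain ⟨y₂, Q₂, hy₂T, hy₂, hQ₂⟩ := hTy.exists_walk P le_rfl hx'Ty hfib.symm
  obtain ⟨g, hg⟩ := (Reachable.of_dist_ne_zero hpos.ne').exists_walk_length_eq_dist
  exact ⟨y₁, y₂, hdisj.ne_of_mem hy₁T hy₂T, hy₁, hy₂,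
    exists_adj_mem_compIn hπ rfl .nil (Nat.zero_le _) Q₁ (by omega),
    exists_adj_mem_compIn hπ hfib.symm g (by omega) Q₂ (by omega)⟩

/-- **Lemma (choice of the pattern radius).**
There is `r ≥ 1` such that for every `x ∈ V(G)`, the connected component `Z = Z(x,r)` of
`x` in `π⁻¹(B_r(π x)) ∩ B_{3r}(x)` satisfies: every `u` at distance exactly `r+1` from
`π x` has at least two distinct preimages adjacent to `Z`. -/
theorem exists_pattern_radius {V W : Type*} (G : SimpleGraph V) (H : SimpleGraph W)
    (hGconn : G.Connected) (hHconn : H.Connected)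
    (hGlf : LocallyFinite' G) (hHlf : LocallyFinite' H)
    (π : V → W) (hπ : IsWeakCover G H π)
    (htame : TameFibres G π) (hdtl : HasDisjointTreeLifting G H π) :
    ∃ r : ℕ, 1 ≤ r ∧ ∀ x : V, ∀ u : W, H.dist (π x) u = r + 1 →
      ∃ y₁ y₂ : V, y₁ ≠ y₂ ∧ π y₁ = u ∧ π y₂ = u ∧
        (∃ z₁ ∈ compIn G (π ⁻¹' ball H (π x) r ∩ ball G x (3 * r)) x, G.Adj z₁ y₁) ∧
        (∃ z₂ ∈ compIn G (π ⁻¹' ball H (π x) r ∩ ball G x (3 * r)) x, G.Adj z₂ y₂) :=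
  exists_pattern_radius_general G H π hπ htame hdtl

end Percolation
end

section
/- Let G and H be quasi-transitive graphs, and let π : V(G) → V(H) be a non-injective weak covering map with the disjoint tree-lifting property. Then π has tame fibres. -/
open MeasureTheory

namespace Percolation

variable {V : Type*} {W : Type*}

/-!
Suppose the fibres are not tame. Pick vertices `xₙ` with no other point of their fibre within
distance `n`, and move them by automorphisms of `G` and `H` to a fixed base point `s ↦ t`;
by quasi-transitivity this yields weak covers `fₙ : G → H` with `fₙ s = t`. Lifting single edges
disjointly transports a pair of distinct points of one fibre to a pair in any other fibre at
controlled distance, so two distinct vertices `v, v'` can share an `fₙ`-fibre only when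
`n < 2 d(s, v) + d(v, v')`. Local finiteness lets the `fₙ` converge pointwise along an
ultrafilter, and the limit is an injective weak cover, hence an isomorphism `G ≃ H`.
Thus `π` becomes a weak cover of `H` by itself, and such a map is injective: some iterate sends
a vertex `z` into its own orbit, so it maps each ball around `z` onto a ball of the same size.
-/

open SimpleGraph Filter

theorem _root_.SimpleGraph.Iso.dist_map_le {V' : Type*} {G : SimpleGraph V} {G' : SimpleGraph V'}
    (φ : G ≃g G') (x y : V) : G'.dist (φ x) (φ y) ≤ G.dist x y := by
  by_cases h : G.Reachable x y
  · obtain ⟨p, hp⟩ := h.exists_walk_length_eq_dist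
    calc G'.dist (φ x) (φ y) ≤ (p.map φ.toHom).length := dist_le _
      _ = G.dist x y := by rw [Walk.length_map, hp]
  · rw [dist_eq_zero_of_not_reachable h,
      dist_eq_zero_of_not_reachable (Iso.reachable_iff.not.mpr h)]

section Graph

variable {X : Type*} {G : SimpleGraph V} {H : SimpleGraph W} {K : SimpleGraph X}

theorem LocallyFinite'.finite_ball (hlf : LocallyFinite' G) (hconn : G.Connected) (x : V)
    (n : ℕ) : (ball G x n).Finite := by
  induction n generalizing x with
  | zero =>
    refine (Set.finite_singleton x).subset fun y hy => ?_
    exact ((hconn.dist_eq_zero_iff).mp (Nat.le_zero.mp hy)).symm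
  | succ n ih =>
    refine ((hlf x).biUnion fun z _ => ih z).insert x |>.subset fun y hy => ?_
    obtain ⟨p, hp⟩ := hconn.exists_walk_length_eq_dist x y
    cases p with
    | nil => exact Set.mem_insert _ _
    | cons hxz q =>
      refine Set.mem_insert_of_mem _ (Set.mem_biUnion hxz ((dist_le q).trans ?_))
      have hy : G.dist x y ≤ n + 1 := hy
      rw [Walk.length_cons] at hp
      omega

namespace IsWeakCover

theorem id : IsWeakCover G G id :=
  ⟨fun _ _ => le_rfl, fun _ u hu => ⟨u, hu, rfl⟩⟩

theorem comp {π : V → W} {ρ : W → X} (hρ : IsWeakCover H K ρ) (hπ : IsWeakCover G H π) :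
    IsWeakCover G K (ρ ∘ π) where
  lipschitz x y := (hρ.lipschitz _ _).trans (hπ.lipschitz x y)
  lift x u hu := by
    obtain ⟨w, hw, rfl⟩ := hρ.lift (π x) u hu
    obtain ⟨y, hy, rfl⟩ := hπ.lift x w hw
    exact ⟨y, hy, rfl⟩

theorem iterate {f : V → V} (hf : IsWeakCover G G f) (n : ℕ) : IsWeakCover G G f^[n] := by
  induction n with
  | zero => exact IsWeakCover.id
  | succ n ih => rw [Function.iterate_succ']; exact hf.comp ih

theorem of_iso (φ : G ≃g H) : IsWeakCover G H φ where
  lipschitz := φ.dist_map_le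
  lift x u hu := ⟨φ.symm u, by rwa [← φ.map_adj_iff, φ.apply_symm_apply], φ.apply_symm_apply u⟩

variable {π : V → W}

theorem exists_walk_lift (hπ : IsWeakCover G H π) {u w : W} (p : H.Walk u w) {x : V}
    (hx : π x = u) : ∃ y, π y = w ∧ ∃ q : G.Walk x y, q.length = p.length := by
  induction p generalizing x with
  | nil => exact ⟨x, hx, .nil, rfl⟩
  | cons hadj p ih =>
    subst hx
    obtain ⟨x', hxx', hx'⟩ := hπ.lift x _ hadj
    obtain ⟨y, hy, q, hq⟩ := ih hx'
    exact ⟨y, hy, .cons hxx' q, by simp [hq]⟩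

theorem exists_preimage_dist_le (hπ : IsWeakCover G H π) (hH : H.Connected) (x : V) (w : W) :
    ∃ y, π y = w ∧ G.dist x y ≤ H.dist (π x) w := by
  obtain ⟨p, hp⟩ := hH.exists_walk_length_eq_dist (π x) w
  obtain ⟨y, hy, q, hq⟩ := hπ.exists_walk_lift p rfl
  exact ⟨y, hy, hp ▸ hq ▸ dist_le q⟩

theorem surjective [Nonempty V] (hπ : IsWeakCover G H π) (hH : H.Preconnected) :
    Function.Surjective π := fun w =>
  let x : V := Classical.arbitrary V
  (hπ.exists_walk_lift (hH (π x) w).some rfl).imp fun _ h => h.1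

theorem nonempty_iso_of_injective [Nonempty V] (hπ : IsWeakCover G H π) (hH : H.Connected)
    (hinj : Function.Injective π) : Nonempty (G ≃g H) := by
  refine ⟨{ toEquiv := Equiv.ofBijective π ⟨hinj, hπ.surjective hH.preconnected⟩,
            map_rel_iff' := fun {v v'} => ⟨fun hadj => ?_, fun hadj => ?_⟩ }⟩
  · obtain ⟨y, hvy, hy⟩ := hπ.lift v (π v') hadj
    exact hinj hy ▸ hvy
  · have hle : H.dist (π v) (π v') ≤ 1 := (dist_eq_one_iff_adj.mpr hadj) ▸ hπ.lipschitz v v'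
    have hpos : 0 < H.dist (π v) (π v') := hH.pos_dist_of_ne (hinj.ne hadj.ne)
    exact dist_eq_one_iff_adj.mp (le_antisymm hle hpos)

end IsWeakCover

end Graph

section SelfCover

variable {H : SimpleGraph W} {f : W → W}

namespace IsWeakCover

theorem injOn_ball_of_iso_apply_eq (hf : IsWeakCover H H f) (hH : H.Connected)
    (hlf : LocallyFinite' H) {γ : H ≃g H} {z : W} (hγ : γ z = f z) (n : ℕ) :
    Set.InjOn f (ball H z n) := by
  have hmaps : Set.MapsTo f (ball H z n) (ball H (f z) n) := fun x hx =>
    (hf.lipschitz z x).trans hx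
  have hsurj : Set.SurjOn f (ball H z n) (ball H (f z) n) := fun w hw => by
    obtain ⟨y, rfl, hy⟩ := hf.exists_preimage_dist_le hH z w
    exact ⟨y, hy.trans hw, rfl⟩
  -- `γ` embeds `ball H z n` into `ball H (f z) n`, so a surjection between them is injective
  have hcard : (ball H z n).ncard ≤ (ball H (f z) n).ncard :=
    Set.ncard_le_ncard_of_injOn γ (fun x hx => hγ ▸ (γ.dist_map_le z x).trans hx)
      γ.injective.injOn (hlf.finite_ball hH _ n)
  intro x hx x' hx' hxx'
  exact Set.inj_on_of_surj_on_of_ncard_le (fun a _ => f a) (fun a ha => hmaps ha)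
    (fun w hw => (hsurj hw).imp fun _ h => ⟨h.1, h.2⟩) hcard hx hx' hxx'
    (hlf.finite_ball hH z n)

theorem injective_of_iso_apply_eq (hf : IsWeakCover H H f) (hH : H.Connected)
    (hlf : LocallyFinite' H) {γ : H ≃g H} {z : W} (hγ : γ z = f z) : Function.Injective f :=
  fun x x' hxx' => hf.injOn_ball_of_iso_apply_eq hH hlf hγ (max (H.dist z x) (H.dist z x'))
    (show H.dist z x ≤ _ from le_max_left _ _) (show H.dist z x' ≤ _ from le_max_right _ _) hxx'

theorem injective_of_quasiTransitive (hf : IsWeakCover H H f) (hH : H.Connected)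
    (hlf : LocallyFinite' H) (hqt : QuasiTransitive H) : Function.Injective f := by
  obtain ⟨S, hS, hrep⟩ := hqt
  choose r hr φ hφ using hrep
  obtain ⟨v⟩ := hH.nonempty
  obtain ⟨k, l, hkl, hr_eq⟩ :=
    hS.exists_lt_map_eq_of_forall_mem (f := fun n => r (f^[n] v)) fun n => hr _
  obtain ⟨m, rfl⟩ := Nat.exists_eq_add_of_lt hkl
  set a := f^[k] v
  have ha : f^[m + 1] a = f^[k + m + 1] v := by
    rw [← Function.iterate_add_apply]; congr 1; omega
  -- two iterates of `v` in the same orbit give an automorphism agreeing with `f^[m+1]` at `a`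
  have hγ : ((φ a).symm.trans (φ (f^[m + 1] a))) a = f^[m + 1] a := by
    have hsymm : (φ a).symm a = r a := by rw [RelIso.symm_apply_eq, hφ]
    change φ _ ((φ a).symm a) = _
    rw [hsymm, hr_eq, ← ha, hφ]
  have hinj := (hf.iterate (m + 1)).injective_of_iso_apply_eq hH hlf hγ
  rw [Function.iterate_succ] at hinj
  exact hinj.of_comp

end IsWeakCover

end SelfCover

section TreeLifting

variable {G : SimpleGraph V} {H : SimpleGraph W} {π : V → W}

theorem IsLift.exists_adj {T : H.Subgraph} {T' : G.Subgraph} (hL : IsLift G H π T T') {x : V}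
    (hx : x ∈ T'.verts) {u : W} (hu : T.Adj (π x) u) : ∃ y ∈ T'.verts, G.Adj x y ∧ π y = u := by
  obtain ⟨y, hy, rfl⟩ := hL.2.1.surjOn (T.edge_vert hu.symm)
  exact ⟨y, hy, T'.adj_sub ((hL.2.2 x y hx hy).mpr hu), rfl⟩

namespace HasDisjointTreeLifting

theorem exists_adj_adj_ne (hdtl : HasDisjointTreeLifting G H π) {z z' : V} (hne : z ≠ z')
    (hzz : π z = π z') {u : W} (hu : H.Adj (π z) u) :
    ∃ y y', G.Adj z y ∧ G.Adj z' y' ∧ π y = u ∧ π y' = u ∧ y ≠ y' := by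
  obtain ⟨T, T', hL, hL', hz, hz', hdisj⟩ :=
    hdtl _ (IsTree.coe_subgraphOfAdj hu) z z' hne hzz
      ((H.subgraphOfAdj hu).edge_vert (H.subgraphOfAdj_adj_self hu))
  obtain ⟨y, hy, hzy, rfl⟩ := hL.exists_adj hz (H.subgraphOfAdj_adj_self hu)
  obtain ⟨y', hy', hzy', hyy'⟩ :=
    hL'.exists_adj hz' (by rw [← hzz]; exact H.subgraphOfAdj_adj_self hu)
  exact ⟨y, y', hzy, hzy', rfl, hyy', fun h => Set.disjoint_left.mp hdisj hy (h ▸ hy')⟩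

theorem exists_ne_pair_of_walk (hdtl : HasDisjointTreeLifting G H π) {u w : W} (p : H.Walk u w)
    {z z' : V} (hne : z ≠ z') (hzz : π z = π z') (hz : π z = u) :
    ∃ y y', π y = w ∧ π y' = w ∧ y ≠ y' ∧ G.dist z y ≤ p.length ∧ G.dist z' y' ≤ p.length := by
  induction p generalizing z z' with
  | nil => exact ⟨z, z', hz, hzz ▸ hz, hne, by simp, by simp⟩
  | cons hadj p ih =>
    subst hz
    obtain ⟨x, x', hzx, hzx', hx, hx', hxx'⟩ := hdtl.exists_adj_adj_ne hne hzz hadj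
    obtain ⟨y, y', hy, hy', hyy', hxy, hxy'⟩ := ih hxx' (hx.trans hx'.symm) hx
    refine ⟨y, y', hy, hy', hyy', ?_, ?_⟩
    · calc G.dist z y ≤ G.dist z x + G.dist x y := hzx.reachable.dist_triangle_left y
        _ ≤ (p.cons hadj).length := by rw [dist_eq_one_iff_adj.mpr hzx, Walk.length_cons]; omega
    · calc G.dist z' y' ≤ G.dist z' x' + G.dist x' y' := hzx'.reachable.dist_triangle_left y'
        _ ≤ (p.cons hadj).length := by rw [dist_eq_one_iff_adj.mpr hzx', Walk.length_cons]; omega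

theorem exists_ne_dist_le (hdtl : HasDisjointTreeLifting G H π) (hG : G.Connected)
    (hH : H.Connected) (hπ : IsWeakCover G H π) {z z' : V} (hne : z ≠ z') (hzz : π z = π z')
    (x : V) : ∃ y ≠ x, π y = π x ∧ G.dist x y ≤ 2 * G.dist x z + G.dist z z' := by
  obtain ⟨p, hp⟩ := hH.exists_walk_length_eq_dist (π z) (π x)
  have hpz : p.length ≤ G.dist x z := hp ▸ dist_comm.trans_le (hπ.lipschitz x z)
  obtain ⟨y, y', hy, hy', hyy', hzy, hzy'⟩ := hdtl.exists_ne_pair_of_walk p hne hzz rfl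
  by_cases hyx : y = x
  · refine ⟨y', fun h => hyy' (hyx.trans h.symm), hy', ?_⟩
    have h₁ := hG.dist_triangle (u := x) (v := z) (w := z')
    have h₂ := hG.dist_triangle (u := x) (v := z') (w := y')
    omega
  · refine ⟨y, hyx, hy, ?_⟩
    have := hG.dist_triangle (u := x) (v := z) (w := y)
    omega

end HasDisjointTreeLifting

end TreeLifting

section Limit

variable {G : SimpleGraph V} {H : SimpleGraph W}

theorem exists_weakCover_frequently_eqOn (hGlf : LocallyFinite' G) (hH : H.Connected)
    (hHlf : LocallyFinite' H) {f : ℕ → V → W} (hf : ∀ n, IsWeakCover G H (f n)) {s : V} {t : W}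
    (hst : ∀ n, f n s = t) :
    ∃ Φ, IsWeakCover G H Φ ∧ ∀ A : Finset V, ∃ᶠ n in atTop, ∀ v ∈ A, f n v = Φ v := by
  classical
  let F := hyperfilter ℕ
  have hlim : ∀ v, ∃ w, ∀ᶠ n in F, f n v = w := fun v => by
    have hball : ball H t (G.dist s v) ∈ F.map (f · v) :=
      Ultrafilter.mem_map.2 (univ_mem' fun n => hst n ▸ (hf n).lipschitz s v)
    obtain ⟨w, -, hw⟩ := Ultrafilter.eq_pure_of_finite_mem (hHlf.finite_ball hH t _) hball
    exact ⟨w, show {w} ∈ F.map (f · v) by rw [hw]; rfl⟩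
  choose Φ hΦ using hlim
  have hagree (A : Finset V) : ∀ᶠ n in F, ∀ v ∈ A, f n v = Φ v :=
    (eventually_all_finset A).2 fun v _ => hΦ v
  refine ⟨Φ, ⟨fun v v' => ?_, fun v u hu => ?_⟩, fun A =>
    (hagree A).frequently.filter_mono Nat.hyperfilter_le_atTop⟩
  · obtain ⟨n, hn⟩ := (hagree {v, v'}).exists
    rw [← hn v (by simp), ← hn v' (by simp)]
    exact (hf n).lipschitz v v'
  · obtain ⟨n, hn⟩ := (hagree (insert v (hGlf v).toFinset)).exists
    obtain ⟨y, hvy, hy⟩ := (hf n).lift v u (hn v (Finset.mem_insert_self _ _) ▸ hu)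
    exact ⟨y, hvy, hn y (Finset.mem_insert_of_mem ((hGlf v).mem_toFinset.mpr hvy)) ▸ hy⟩

theorem exists_injective_weakCover_of_eventually_ne (hGlf : LocallyFinite' G)
    (hH : H.Connected) (hHlf : LocallyFinite' H) {f : ℕ → V → W}
    (hf : ∀ n, IsWeakCover G H (f n)) {s : V} {t : W} (hst : ∀ n, f n s = t)
    (hsep : ∀ v v', v ≠ v' → ∀ᶠ n in atTop, f n v ≠ f n v') :
    ∃ Φ, IsWeakCover G H Φ ∧ Function.Injective Φ := by
  classical
  obtain ⟨Φ, hΦ, hfreq⟩ := exists_weakCover_frequently_eqOn hGlf hH hHlf hf hst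
  refine ⟨Φ, hΦ, fun v v' hvv' => by_contra fun hne => ?_⟩
  obtain ⟨n, hn, hfn⟩ := ((hfreq {v, v'}).and_eventually (hsep v v' hne)).exists
  exact hfn (by rw [hn v (by simp), hn v' (by simp), hvv'])

end Limit

theorem exists_mem_forall_of_antitone {β : Type*} {S : Set β} (hS : S.Finite)
    {P : ℕ → β → Prop} (hP : ∀ b, Antitone (P · b)) (h : ∀ n, ∃ b ∈ S, P n b) :
    ∃ b ∈ S, ∀ n, P n b := by
  by_contra! hne
  have hev : ∀ᶠ n in atTop, ∀ b ∈ S, ¬P n b := (eventually_all_finite hS).2 fun b hb => by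
    obtain ⟨m, hm⟩ := hne b hb
    exact eventually_atTop.2 ⟨m, fun n hmn hn => hm (hP b hmn hn)⟩
  obtain ⟨n, hn⟩ := hev.exists
  obtain ⟨b, hb, hPb⟩ := h n
  exact hn b hb hPb

section NotTame

variable {G : SimpleGraph V} {H : SimpleGraph W} {π : V → W}

def IsFibreIsolated (G : SimpleGraph V) (π : V → W) (n : ℕ) (x : V) : Prop :=
  ∀ y, π x = π y → 0 < G.dist x y → n < G.dist x y

theorem IsFibreIsolated.anti {m n : ℕ} (hmn : m ≤ n) {x : V} (hx : IsFibreIsolated G π n x) :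
    IsFibreIsolated G π m x :=
  fun y h₁ h₂ => hmn.trans_lt (hx y h₁ h₂)

theorem exists_base_of_not_tameFibres (hqtG : QuasiTransitive G) (hqtH : QuasiTransitive H)
    (h : ¬TameFibres G π) :
    ∃ s t, ∀ n, ∃ (φ : G ≃g G) (ψ : H ≃g H), π (φ s) = ψ t ∧ IsFibreIsolated G π n (φ s) := by
  rw [TameFibres] at h
  push Not at h
  obtain ⟨SG, hSG, hrepG⟩ := hqtG
  obtain ⟨SH, hSH, hrepH⟩ := hqtH
  obtain ⟨⟨s, t⟩, -, hst⟩ := exists_mem_forall_of_antitone (hSG.prod hSH)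
    (P := fun n (st : V × W) => ∃ (φ : G ≃g G) (ψ : H ≃g H),
      π (φ st.1) = ψ st.2 ∧ IsFibreIsolated G π n (φ st.1))
    (by
      rintro _ m n hmn ⟨φ, ψ, hφψ, hisol⟩
      exact ⟨φ, ψ, hφψ, hisol.anti hmn⟩)
    fun n => by
      obtain ⟨x, hx⟩ := h n
      obtain ⟨s, hs, φ, rfl⟩ := hrepG x
      obtain ⟨t, ht, ψ, hψ⟩ := hrepH (π (φ s))
      exact ⟨(s, t), ⟨hs, ht⟩, φ, ψ, hψ.symm, hx⟩
  exact ⟨s, t, hst⟩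

theorem exists_weakCovers_eventually_ne_of_not_tameFibres (hG : G.Connected) (hH : H.Connected)
    (hqtG : QuasiTransitive G) (hqtH : QuasiTransitive H) (hπ : IsWeakCover G H π)
    (hdtl : HasDisjointTreeLifting G H π) (h : ¬TameFibres G π) :
    ∃ (s : V) (t : W) (f : ℕ → V → W), (∀ n, IsWeakCover G H (f n)) ∧ (∀ n, f n s = t) ∧
      ∀ v v', v ≠ v' → ∀ᶠ n in atTop, f n v ≠ f n v' := by
  obtain ⟨s, t, hst⟩ := exists_base_of_not_tameFibres hqtG hqtH h
  choose φ ψ hφψ hisol using hst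
  refine ⟨s, t, fun n => (ψ n).symm ∘ π ∘ φ n,
    fun n => (IsWeakCover.of_iso _).comp (hπ.comp (IsWeakCover.of_iso _)),
    fun n => by simp [hφψ], fun v v' hne => eventually_atTop.2
      ⟨2 * G.dist s v + G.dist v v', fun n hn hfn => ?_⟩⟩
  have hππ : π (φ n v) = π (φ n v') := (ψ n).symm.injective hfn
  obtain ⟨y, hy, hyπ, hyd⟩ :=
    hdtl.exists_ne_dist_le hG hH hπ ((φ n).injective.ne hne) hππ (φ n s)
  have := hisol n y hyπ.symm (hG.pos_dist_of_ne hy.symm)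
  have := (φ n).dist_map_le s v
  have := (φ n).dist_map_le v v'
  omega

end NotTame

/-- **Lemma (tameness of fibres).**
A non-injective weak covering map between quasi-transitive graphs with the disjoint
tree-lifting property has tame fibres. -/
theorem tameFibres_of_disjointTreeLifting {V W : Type*}
    (G : SimpleGraph V) (H : SimpleGraph W)
    (hGconn : G.Connected) (hHconn : H.Connected)
    (hGlf : LocallyFinite' G) (hHlf : LocallyFinite' H)
    (hqtG : QuasiTransitive G) (hqtH : QuasiTransitive H)
    (π : V → W) (hπ : IsWeakCover G H π)
    (hni : ¬ Function.Injective π)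
    (hdtl : HasDisjointTreeLifting G H π) :
    TameFibres G π := by
  by_contra hnot
  obtain ⟨s, t, f, hf, hst, hsep⟩ :=
    exists_weakCovers_eventually_ne_of_not_tameFibres hGconn hHconn hqtG hqtH hπ hdtl hnot
  obtain ⟨Φ, hΦ, hΦinj⟩ := exists_injective_weakCover_of_eventually_ne hGlf hHconn hHlf hf hst hsep
  have := hGconn.nonempty
  obtain ⟨σ⟩ := hΦ.nonempty_iso_of_injective hHconn hΦinj
  have hinj := (hπ.comp (IsWeakCover.of_iso σ.symm)).injective_of_quasiTransitive hHconn hHlf hqtH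
  exact hni ((Function.Injective.of_comp_iff' π σ.symm.bijective).mp hinj)

end Percolation
end

section
/- Let G and H be graphs and let π : V(G) → V(H) be a weak covering map. Then π can lift trees: for every subtree T of H and every vertex x ∈ V(G) with π(x) ∈ V(T), there is a lift of T that contains x. -/
open MeasureTheory

/-!
Root `T` at `π x` and lift the path from the root to each vertex `a` of `T` edge by edge,
always choosing the same lifted neighbour for a given vertex and target. In a tree the root path
to one endpoint of an edge extends the root path to the other endpoint by that edge, so adjacent
vertices get adjacent lifts. The lift is a section of `π`, hence injective, and its image is a
copy of `T`.
-/

namespace SimpleGraph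

variable {α V : Type*} {T : SimpleGraph α} {G : SimpleGraph V}

lemma IsAcyclic.eq_concat_or_eq_concat (hT : T.IsAcyclic) {r a b : α} {p : T.Walk r a}
    {q : T.Walk r b} (hp : p.IsPath) (hq : q.IsPath) (h : T.Adj a b) :
    q = p.concat h ∨ p = q.concat h.symm := by
  classical
  by_cases hb : b ∈ p.support
  · right
    have htake : p.takeUntil b hb = q :=
      congrArg Subtype.val ((hT.subsingleton_path _ _).elim ⟨_, hp.takeUntil hb⟩ ⟨q, hq⟩)
    have hdrop : p.dropUntil b hb = Walk.cons h.symm Walk.nil :=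
      congrArg Subtype.val ((hT.subsingleton_path _ _).elim ⟨_, hp.dropUntil hb⟩
        ⟨_, Walk.IsPath.nil.cons (by simpa using h.ne.symm)⟩)
    conv_lhs => rw [← p.take_spec hb, htake, hdrop]
    rfl
  · left
    exact congrArg Subtype.val ((hT.subsingleton_path _ _).elim ⟨q, hq⟩ ⟨_, hp.concat hb h⟩)

namespace Walk

variable (step : V → α → α → V)

def liftEnd {a b : α} (p : T.Walk a b) (y : V) : V :=
  p.darts.foldl (fun y d ↦ step y d.fst d.snd) y

lemma liftEnd_concat {a b c : α} (p : T.Walk a b) (h : T.Adj b c) (y : V) :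
    (p.concat h).liftEnd step y = step (p.liftEnd step y) b c := by
  simp [liftEnd, darts_concat]

lemma rel_liftEnd (R : V → α → Prop)
    (hstep : ∀ y a b, R y a → T.Adj a b → R (step y a b) b) {a b : α} (p : T.Walk a b)
    {y : V} (hy : R y a) : R (p.liftEnd step y) b := by
  induction p generalizing y with
  | nil => exact hy
  | cons h _ ih => exact ih (hstep _ _ _ hy h)

end Walk

theorem IsTree.exists_hom_lift (hT : T.IsTree) (R : V → α → Prop)
    (hR : ∀ y a b, R y a → T.Adj a b → ∃ y', G.Adj y y' ∧ R y' b) {r : α} {x : V}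
    (hx : R x r) : ∃ s : T →g G, s r = x ∧ ∀ a, R (s a) a := by
  classical
  have : Nonempty V := ⟨x⟩
  choose! step hstep using hR
  let pathTo (a : α) : T.Path r a := (hT.connected.preconnected r a).some.toPath
  have path_unique {a : α} (p q : T.Path r a) : p = q :=
    (hT.isAcyclic.subsingleton_path _ _).elim p q
  let s (a : α) : V := (pathTo a).1.liftEnd step x
  have hs (a : α) : R (s a) a :=
    Walk.rel_liftEnd step R (fun y a b hy h ↦ (hstep y a b hy h).2) _ hx
  refine ⟨⟨s, fun {a b} h ↦ ?_⟩, ?_, hs⟩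
  · rcases hT.isAcyclic.eq_concat_or_eq_concat (pathTo a).2 (pathTo b).2 h with e | e
    · simp only [s, e, Walk.liftEnd_concat]
      exact (hstep _ _ _ (hs a) h).1
    · simp only [s, e, Walk.liftEnd_concat]
      exact (hstep _ _ _ (hs b) h.symm).1.symm
  · change (pathTo r).1.liftEnd step x = x
    rw [path_unique (pathTo r) Path.nil]
    rfl

end SimpleGraph

namespace Percolation

variable {V : Type*} {W : Type*}

lemma isLift_map_top {G : SimpleGraph V} {H : SimpleGraph W} {π : V → W}
    {T : H.Subgraph} (hT : T.coe.IsTree) (s : T.coe →g G) (hs : ∀ a, π (s a) = a) :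
    IsLift G H π T ((⊤ : T.coe.Subgraph).map s) := by
  have hinj : Function.Injective s := fun a b h ↦ Subtype.ext (by rw [← hs a, ← hs b, h])
  refine ⟨(SimpleGraph.Copy.isoToSubgraph ⟨s, hinj⟩).isTree_iff.mp hT, ⟨?_, ?_, ?_⟩, ?_⟩
  · rintro _ ⟨a, -, rfl⟩
    rw [hs]
    exact a.2
  · rintro _ ⟨a, -, rfl⟩ _ ⟨b, -, rfl⟩ h
    rw [hs, hs] at h
    rw [Subtype.ext h]
  · intro w hw
    exact ⟨s ⟨w, hw⟩, ⟨_, trivial, rfl⟩, hs _⟩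
  · rintro _ _ ⟨a, -, rfl⟩ ⟨b, -, rfl⟩
    simp [Relation.map_apply_apply hinj hinj, hs]

theorem weakCover_lifts_trees_general {V W : Type*} (G : SimpleGraph V) (H : SimpleGraph W)
    (π : V → W) (hπ : IsWeakCover G H π) :
    ∀ T : H.Subgraph, T.coe.IsTree → ∀ x : V, π x ∈ T.verts →
      ∃ T' : G.Subgraph, IsLift G H π T T' ∧ x ∈ T'.verts := by
  intro T hT x hx
  obtain ⟨s, hsx, hs⟩ := hT.exists_hom_lift (fun y a ↦ π y = a)
    (fun y a b hy hab ↦ hπ.lift y b (hy ▸ T.adj_sub hab)) (r := ⟨π x, hx⟩) rfl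
  exact ⟨_, isLift_map_top hT s hs, ⟨π x, hx⟩, trivial, hsx⟩

/-- **Lemma (weak covering maps lift trees).**
If `π` is a weak covering map, then for every subtree `T` of `H` and every vertex `x`
of `G` with `π x ∈ V(T)`, there is a lift of `T` containing `x`. -/
theorem weakCover_lifts_trees {V W : Type*} (G : SimpleGraph V) (H : SimpleGraph W)
    (hGconn : G.Connected) (hHconn : H.Connected)
    (hGlf : LocallyFinite' G) (hHlf : LocallyFinite' H)
    (π : V → W) (hπ : IsWeakCover G H π) :
    ∀ T : H.Subgraph, T.coe.IsTree → ∀ x : V, π x ∈ T.verts →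
      ∃ T' : G.Subgraph, IsLift G H π T T' ∧ x ∈ T'.verts :=
  weakCover_lifts_trees_general G H π hπ

end Percolation
end

section
/- Let G and H be graphs and let π : V(G) → V(H) be a weak covering map. Then for every p ∈ [0,1] and any two finite subsets A, B ⊆ V(H), one has P_p[π⁻¹(A) ↔ π⁻¹(B)] ≥ P_p[A ↔ B], where the left-hand probability is for Bernoulli bond percolation of parameter p on G and the right-hand one for Bernoulli bond percolation of parameter p on H. -/
open MeasureTheory

namespace Percolation

variable {V : Type*} {W : Type*}

/-!
Restricting the configuration to a finite set `F` of edges of `H` exhausts the event `A ↔ B` as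
`F` grows, so it suffices to treat events that only see `F`. Explore the open `F`-cluster of `A`
edge by edge while lifting it to `G`: an edge `{u, v}` at an already lifted vertex `u ↦ x` is
lifted, by the weak lifting property, to an edge `{x, y}` of `G`, and the state of `{x, y}` in
`G` is read as the state of `{u, v}`. As each lift depends only on the states read before it, the
events "`ω` copies the pattern `θ` on `F` along its lift" are disjoint cylinders that carry the
Bernoulli probability of `θ`, and on each of them every open `H`-path from `A` lifts to an open
`G`-path from `π⁻¹ A`.
-/

open SimpleGraph Function

lemma piecewise_false_eq_true {ι : Type*} {F : Finset ι} [∀ i, Decidable (i ∈ F)]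
    {ω : ι → Bool} {i : ι} :
    (F.piecewise ω fun _ => false) i = true ↔ i ∈ F ∧ ω i = true := by
  by_cases hi : i ∈ F <;> simp [Finset.piecewise, hi]

lemma piecewise_erase_of_eq_false {ι : Type*} [DecidableEq ι] {F : Finset ι}
    [∀ i, Decidable (i ∈ F)] {ω : ι → Bool} {i : ι} (hi : ω i = false) :
    ((F.erase i).piecewise ω fun _ => false) = F.piecewise ω fun _ => false := by
  funext j
  by_cases hji : j = i <;> simp [Finset.piecewise, hji, hi]

lemma piecewise_extend_val_eq {ι : Type*} {F : Finset ι} [∀ i, Decidable (i ∈ F)]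
    {ω : ι → Bool} {θ : F → Bool} (h : ∀ k : F, ω k = θ k) :
    (F.piecewise (extend Subtype.val θ fun _ => false) fun _ => false) =
      F.piecewise ω fun _ => false :=
  F.piecewise_congr (fun i hi => (Subtype.val_injective.extend_apply _ _ ⟨i, hi⟩).trans
    (h ⟨i, hi⟩).symm) fun _ _ => rfl

section OpenClusters

variable {G : SimpleGraph V} {ω ω' : G.edgeSet → Bool} {A S : Set V}

lemma openGraph_le (ω : G.edgeSet → Bool) : openGraph G ω ≤ G :=
  fun _ _ h => h.1

lemma openGraph_mono (h : ∀ e, ω e = true → ω' e = true) :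
    openGraph G ω ≤ openGraph G ω' :=
  fun _ _ ⟨hadj, he⟩ => ⟨hadj, h _ he⟩

lemma connectedEvent_mono {B : Set V} (h : ∀ e, ω e = true → ω' e = true)
    (hω : ω ∈ connectedEvent G A B) : ω' ∈ connectedEvent G A B :=
  let ⟨a, ha, b, hb, hab⟩ := hω
  ⟨a, ha, b, hb, hab.mono (openGraph_mono h)⟩

lemma subset_clusterOf : A ⊆ clusterOf G ω A :=
  fun a ha => ⟨a, ha, Reachable.refl a⟩

lemma clusterOf_closed {x y : V} (hx : x ∈ clusterOf G ω A) (hxy : (openGraph G ω).Adj x y) :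
    y ∈ clusterOf G ω A :=
  let ⟨a, ha, hax⟩ := hx
  ⟨a, ha, hax.trans hxy.reachable⟩

lemma clusterOf_subset (hAS : A ⊆ S)
    (hS : ∀ x y, (openGraph G ω).Adj x y → x ∈ S → y ∈ S) : clusterOf G ω A ⊆ S := by
  rintro y ⟨a, ha, hay⟩
  rw [reachable_iff_reflTransGen] at hay
  induction hay with
  | refl => exact hAS ha
  | tail _ hxy ih => exact hS _ _ hxy ih

lemma clusterOf_subset_insert {f : G.edgeSet} {u v : V} (hf : (f : Sym2 V) = s(u, v))
    (hu : u ∈ A) (h : ∀ e ≠ f, ω e = true → ω' e = true) :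
    clusterOf G ω A ⊆ clusterOf G ω' (insert v A) := by
  refine clusterOf_subset (fun a ha => subset_clusterOf (Set.mem_insert_of_mem v ha)) ?_
  rintro x y ⟨hxy, he⟩ hx
  by_cases hef : (⟨s(x, y), hxy⟩ : G.edgeSet) = f
  · have hy : y ∈ s(u, v) := hf ▸ congrArg Subtype.val hef ▸ Sym2.mem_mk_right x y
    rcases Sym2.mem_iff.1 hy with rfl | rfl
    · exact subset_clusterOf (Set.mem_insert_of_mem _ hu)
    · exact subset_clusterOf (Set.mem_insert y A)
  · exact clusterOf_closed hx ⟨hxy, h _ hef he⟩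

lemma reachable_openGraph_of_walk {S : Set V}
    (h : ∀ e : G.edgeSet, (∀ z ∈ (e : Sym2 V), z ∈ S) → ω e = true → ω' e = true)
    {a b : V} (w : (openGraph G ω).Walk a b) (hw : ∀ z ∈ w.support, z ∈ S) :
    (openGraph G ω').Reachable a b := by
  induction w with
  | nil => rfl
  | cons hxy w ih =>
      simp only [Walk.support_cons, List.mem_cons, forall_eq_or_imp] at hw
      have hxy' : (openGraph G ω').Adj _ _ := ⟨hxy.1, h _ (fun z hz => ?_) hxy.2⟩
      · exact hxy'.reachable.trans (ih hw.2)
      rcases Sym2.mem_iff.1 hz with rfl | rfl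
      exacts [hw.1, hw.2 _ w.start_mem_support]

end OpenClusters

section BernoulliCylinders

variable {ι K : Type*} [Fintype K] {p : ℝ} {μ : Measure (ι → Bool)}

lemma measurableSet_cylinder (M : K → ι) (θ : K → Bool) :
    MeasurableSet {ω : ι → Bool | ∀ k, ω (M k) = θ k} := by
  simp only [Set.ofPred_forall]
  exact .iInter fun k => measurableSet_eq_fun (measurable_pi_apply (M k)) measurable_const

lemma IsBernoulliProduct.measure_cylinder (hμ : IsBernoulliProduct p μ) {M : K → ι}
    (hM : Injective M) (θ : K → Bool) :
    μ {ω | ∀ k, ω (M k) = θ k} = ∏ k, ENNReal.ofReal (if θ k then p else 1 - p) := by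
  have hset : {ω : ι → Bool | ∀ k, ω (M k) = θ k} =
      {ω | ∀ i ∈ Finset.univ.map ⟨M, hM⟩, ω i = extend M θ (fun _ => false) i} := by
    ext ω
    simp [hM.extend_apply]
  rw [hset, hμ.2, Finset.prod_map]
  simp [hM.extend_apply]

lemma IsBernoulliProduct.measure_biUnion_cylinder (hμ : IsBernoulliProduct p μ)
    (M : (K → Bool) → K → ι) (hM : ∀ θ, Injective (M θ))
    (hdisj : ∀ (ω : ι → Bool) (θ θ' : K → Bool),
      (∀ k, ω (M θ k) = θ k) → (∀ k, ω (M θ' k) = θ' k) → θ = θ')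
    (S : Finset (K → Bool)) :
    μ (⋃ θ ∈ S, {ω | ∀ k, ω (M θ k) = θ k}) =
      ∑ θ ∈ S, ∏ k, ENNReal.ofReal (if θ k then p else 1 - p) := by
  refine (measure_biUnion_finset (fun θ _ θ' _ hne => Set.disjoint_left.2 fun ω h h' =>
    hne (hdisj ω θ θ' h h')) (fun θ _ => measurableSet_cylinder (M θ) θ)).trans ?_
  exact Finset.sum_congr rfl fun θ _ => hμ.measure_cylinder (hM θ) θ

end BernoulliCylinders

section AdaptedLifting

open scoped Classical

variable {G : SimpleGraph V} {H : SimpleGraph W} {π : V → W}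

lemma IsWeakCover.surjective_s19 (hπ : IsWeakCover G H π) [Nonempty V] (hH : H.Preconnected) :
    Surjective π := by
  intro w
  obtain ⟨x₀⟩ := ‹Nonempty V›
  obtain ⟨q⟩ := hH (π x₀) w
  suffices ∀ (u v : W) (_ : H.Walk u v) (x : V), π x = u → ∃ y, π y = v from
    this _ _ q x₀ rfl
  intro u v q
  induction q with
  | nil => exact fun x hx => ⟨x, hx⟩
  | cons hadj _ ih =>
      intro x hx
      obtain ⟨y, -, hy⟩ := hπ.lift x _ (hx ▸ hadj)
      exact ih y hy

lemma IsWeakCover.exists_map_edge_eq (hπ : IsWeakCover G H π) (hsurj : Surjective π)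
    (f : H.edgeSet) : ∃ e : G.edgeSet, Sym2.map π e = f := by
  obtain ⟨⟨u, v⟩, huv⟩ := (f : Sym2 W).exists_rep
  obtain ⟨x, rfl⟩ := hsurj u
  have hadj : s(π x, v) ∈ H.edgeSet := (congrArg (· ∈ H.edgeSet) huv).mpr f.2
  obtain ⟨y, hxy, rfl⟩ := hπ.lift x v hadj
  exact ⟨⟨s(x, y), hxy⟩, huv⟩

/-- `M η` lifts the edges of `H` to `G` as an exploration of the open cluster of `A` in `η`
restricted to `F`, started from the lifts `X a` of the `a ∈ A`, would choose them. We say that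
`ω` copies `η` along `M η` if `ω (M η f) = η f` for all `f ∈ F`. -/
structure IsAdaptedLifting (π : V → W) (F : Finset H.edgeSet) (A : Set W) (X : W → V)
    (M : (H.edgeSet → Bool) → H.edgeSet → G.edgeSet) : Prop where
  map_edge : ∀ η f, Sym2.map π (M η f) = f
  eqOn_of_copies : ∀ (ω : G.edgeSet → Bool) (η η' : H.edgeSet → Bool),
    (∀ f ∈ F, ω (M η f) = η f) → (∀ f ∈ F, ω (M η' f) = η' f) →
      ∀ f ∈ F, η f = η' f
  exists_reachable_of_copies : ∀ (ω : G.edgeSet → Bool) (η : H.edgeSet → Bool),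
    (∀ f ∈ F, ω (M η f) = η f) → ∀ b ∈ clusterOf H (F.piecewise η fun _ => false) A,
      ∃ a ∈ A, ∃ y, π y = b ∧ (openGraph G ω).Reachable (X a) y

variable {F : Finset H.edgeSet} {A : Set W} {X : W → V}
  {M : (H.edgeSet → Bool) → H.edgeSet → G.edgeSet}

lemma IsAdaptedLifting.injective (hM : IsAdaptedLifting π F A X M) (η : H.edgeSet → Bool) :
    Injective (M η) := fun f g h =>
  Subtype.ext <| by rw [← hM.map_edge η f, ← hM.map_edge η g, h]

lemma isAdaptedLifting_const {L : H.edgeSet → G.edgeSet} (hL : ∀ f, Sym2.map π (L f) = f)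
    (hX : ∀ a ∈ A, π (X a) = a)
    (hF : ∀ f ∈ F, ∀ u ∈ A, ∀ v, (f : Sym2 W) ≠ s(u, v)) :
    IsAdaptedLifting π F A X fun _ => L where
  map_edge _ := hL
  eqOn_of_copies ω η η' h h' f hf := (h f hf).symm.trans (h' f hf)
  exists_reachable_of_copies ω η _ b hb := by
    have hA : clusterOf H (F.piecewise η fun _ => false) A ⊆ A := by
      refine clusterOf_subset subset_rfl fun x y ⟨hxy, he⟩ hx => ?_
      exact absurd rfl (hF _ (piecewise_false_eq_true.1 he).1 x hx y)
    exact ⟨b, hA hb, X b, hX b (hA hb), .refl _⟩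

/-- Explore the edge `f = {u, v}` at `u ∈ A` first, through its lift `{X u, y}`; the rest
is explored by `M₁`, from `insert v A` with `y` lifting `v`, if `f` is open, and by `M₀`
otherwise. -/
lemma IsAdaptedLifting.of_erase {f : H.edgeSet} {u v : W} {y : V} (hfF : f ∈ F)
    (hf : (f : Sym2 W) = s(u, v)) (hu : u ∈ A) (hXu : π (X u) = u) (hxy : G.Adj (X u) y)
    (hy : π y = v) {M₀ M₁ : (H.edgeSet → Bool) → H.edgeSet → G.edgeSet}
    (h₀ : IsAdaptedLifting π (F.erase f) A X M₀)
    (h₁ : IsAdaptedLifting π (F.erase f) (insert v A) (update X v y) M₁) :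
    IsAdaptedLifting π F A X
      fun η => update (if η f then M₁ η else M₀ η) f ⟨s(X u, y), hxy⟩ := by
  set M := fun η => update (if η f then M₁ η else M₀ η) f ⟨s(X u, y), hxy⟩
  have copies_erase : ∀ (ω : G.edgeSet → Bool) η, (∀ g ∈ F, ω (M η g) = η g) →
      ω ⟨s(X u, y), hxy⟩ = η f ∧
        ∀ g ∈ F.erase f, ω ((if η f then M₁ η else M₀ η) g) = η g := by
    refine fun ω η h => ⟨by simpa [M] using h f hfF, fun g hg => ?_⟩
    simpa [M, update_of_ne (Finset.ne_of_mem_erase hg)] using h g (Finset.mem_of_mem_erase hg)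
  refine ⟨fun η g => ?_, fun ω η η' h h' g hg => ?_, fun ω η h b hb => ?_⟩
  · by_cases hgf : g = f
    · subst hgf
      simp [M, hf, hXu, hy]
    · simp only [M, update_of_ne hgf]
      split
      exacts [h₁.map_edge η g, h₀.map_edge η g]
  · obtain ⟨he, hrest⟩ := copies_erase ω η h
    obtain ⟨he', hrest'⟩ := copies_erase ω η' h'
    -- both read the state of `f` off the same edge `{X u, y}`, so they take the same branch
    have hff : η f = η' f := he.symm.trans he'
    by_cases hgf : g = f
    · exact hgf ▸ hff
    rw [← hff] at hrest'
    cases hηf : η f <;> simp only [hηf] at hrest hrest'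
    exacts [h₀.eqOn_of_copies ω η η' hrest hrest' g (Finset.mem_erase.2 ⟨hgf, hg⟩),
      h₁.eqOn_of_copies ω η η' hrest hrest' g (Finset.mem_erase.2 ⟨hgf, hg⟩)]
  · obtain ⟨he, hrest⟩ := copies_erase ω η h
    cases hηf : η f <;> simp only [hηf] at he hrest
    · rw [← piecewise_erase_of_eq_false hηf] at hb
      exact h₀.exists_reachable_of_copies ω η hrest b hb
    · have hb' : b ∈ clusterOf H ((F.erase f).piecewise η fun _ => false) (insert v A) :=
        clusterOf_subset_insert hf hu (fun g hgf => by simp [Finset.piecewise, hgf]) hb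
      obtain ⟨a, ha, z, hz, hreach⟩ := h₁.exists_reachable_of_copies ω η hrest b hb'
      by_cases hav : a = v
      · subst hav
        rw [update_self] at hreach
        have hopen : (openGraph G ω).Adj (X u) y := ⟨hxy, he⟩
        exact ⟨u, hu, z, hz, hopen.reachable.trans hreach⟩
      · rw [update_of_ne hav] at hreach
        exact ⟨a, ha.resolve_left hav, z, hz, hreach⟩

theorem IsWeakCover.exists_isAdaptedLifting (hπ : IsWeakCover G H π) (hsurj : Surjective π)
    (F : Finset H.edgeSet) (A : Set W) (X : W → V) (hX : ∀ a ∈ A, π (X a) = a) :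
    ∃ M : (H.edgeSet → Bool) → H.edgeSet → G.edgeSet, IsAdaptedLifting π F A X M := by
  induction F using Finset.strongInduction generalizing A X with
  | H F ih =>
  by_cases hF : ∃ f ∈ F, ∃ u ∈ A, ∃ v, (f : Sym2 W) = s(u, v)
  · obtain ⟨f, hfF, u, hu, v, hf⟩ := hF
    have hadj : H.Adj (π (X u)) v := by
      rw [hX u hu, ← H.mem_edgeSet, ← hf]; exact f.2
    obtain ⟨y, hxy, hy⟩ := hπ.lift (X u) v hadj
    have hX' : ∀ a ∈ insert v A, π (update X v y a) = a := by
      rintro a (rfl | ha)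
      · rwa [update_self]
      · by_cases hav : a = v
        · subst hav; rwa [update_self]
        · rw [update_of_ne hav, hX a ha]
    obtain ⟨M₀, h₀⟩ := ih _ (Finset.erase_ssubset hfF) A X hX
    obtain ⟨M₁, h₁⟩ := ih _ (Finset.erase_ssubset hfF) (insert v A) _ hX'
    exact ⟨_, .of_erase hfF hf hu (hX u hu) hxy hy h₀ h₁⟩
  · push Not at hF
    choose L hL using hπ.exists_map_edge_eq hsurj
    exact ⟨_, isAdaptedLifting_const hL hX hF⟩

end AdaptedLifting

section Comparison

open scoped Classical

variable {G : SimpleGraph V} {H : SimpleGraph W} {π : V → W}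

lemma IsAdaptedLifting.mem_connectedEvent {F : Finset H.edgeSet} {A B : Set W} {X : W → V}
    {M : (H.edgeSet → Bool) → H.edgeSet → G.edgeSet} (hM : IsAdaptedLifting π F A X M)
    (hX : ∀ a ∈ A, π (X a) = a) {ω : G.edgeSet → Bool} {η : H.edgeSet → Bool}
    (hω : ∀ f ∈ F, ω (M η f) = η f)
    (hη : (F.piecewise η fun _ => false) ∈ connectedEvent H A B) :
    ω ∈ connectedEvent G (π ⁻¹' A) (π ⁻¹' B) := by
  obtain ⟨a, ha, b, hb, hab⟩ := hη
  obtain ⟨a', ha', y, rfl, hreach⟩ := hM.exists_reachable_of_copies ω η hω _ ⟨a, ha, hab⟩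
  exact ⟨X a', by rwa [Set.mem_preimage, hX a' ha'], y, hb, hreach⟩

theorem IsWeakCover.measure_piecewise_mem_connectedEvent_le (hπ : IsWeakCover G H π)
    (hsurj : Surjective π) (F : Finset H.edgeSet) (A B : Set W) {p : ℝ}
    {μG : Measure (G.edgeSet → Bool)} {μH : Measure (H.edgeSet → Bool)}
    (hμG : IsBernoulliProduct p μG) (hμH : IsBernoulliProduct p μH) :
    μH {ω | (F.piecewise ω fun _ => false) ∈ connectedEvent H A B} ≤
      μG (connectedEvent G (π ⁻¹' A) (π ⁻¹' B)) := by
  have hX : ∀ a ∈ A, π (surjInv hsurj a) = a := fun a _ => surjInv_eq hsurj a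
  obtain ⟨M, hM⟩ := hπ.exists_isAdaptedLifting hsurj F A _ hX
  let ext (θ : F → Bool) : H.edgeSet → Bool := extend Subtype.val θ fun _ => false
  have ext_val (θ : F → Bool) (k : F) : ext θ k = θ k :=
    Subtype.val_injective.extend_apply _ _ k
  have copies (ω : G.edgeSet → Bool) (θ : F → Bool)
      (h : ∀ k : F, ω (M (ext θ) k) = θ k) :
      ∀ f ∈ F, ω (M (ext θ) f) = ext θ f := fun f hf => by
    rw [ext_val θ ⟨f, hf⟩]; exact h ⟨f, hf⟩
  let S : Finset (F → Bool) :=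
    Finset.univ.filter fun θ => (F.piecewise (ext θ) fun _ => false) ∈ connectedEvent H A B
  have hS : {ω | (F.piecewise ω fun _ => false) ∈ connectedEvent H A B} =
      ⋃ θ ∈ S, {ω | ∀ k : F, ω k = θ k} := by
    ext ω
    simp only [Set.mem_ofPred_eq, Set.mem_iUnion, exists_prop]
    refine ⟨fun h => ⟨fun k => ω k, ?_, fun _ => rfl⟩, fun ⟨θ, hθ, hω⟩ => ?_⟩
    · refine Finset.mem_filter.2 ⟨Finset.mem_univ _, ?_⟩
      rwa [piecewise_extend_val_eq (ω := ω) fun _ => rfl]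
    · rw [← piecewise_extend_val_eq hω]
      exact (Finset.mem_filter.1 hθ).2
  calc μH {ω | (F.piecewise ω fun _ => false) ∈ connectedEvent H A B}
      = ∑ θ ∈ S, ∏ k, ENNReal.ofReal (if θ k then p else 1 - p) := by
        rw [hS]
        exact hμH.measure_biUnion_cylinder (fun _ => Subtype.val) (fun _ => Subtype.val_injective)
          (fun ω θ θ' h h' => funext fun k => (h k).symm.trans (h' k)) S
    _ = μG (⋃ θ ∈ S, {ω | ∀ k : F, ω (M (ext θ) k) = θ k}) := by
        refine (hμG.measure_biUnion_cylinder (fun θ k => M (ext θ) k)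
          (fun θ => (hM.injective _).comp Subtype.val_injective) (fun ω θ θ' h h' => ?_) S).symm
        funext k
        rw [← ext_val θ k, ← ext_val θ' k]
        exact hM.eqOn_of_copies ω _ _ (copies ω θ h) (copies ω θ' h') k k.2
    _ ≤ μG (connectedEvent G (π ⁻¹' A) (π ⁻¹' B)) :=
        measure_mono <| Set.iUnion₂_subset fun θ hθ ω hω =>
          hM.mem_connectedEvent hX (copies ω θ hω) (Finset.mem_filter.1 hθ).2

end Comparison

section Exhaustion

open scoped Classical

variable {H : SimpleGraph W} {A : Set W}

def walkNbhd (H : SimpleGraph W) (A : Set W) (n : ℕ) : Set W :=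
  {z | ∃ a ∈ A, ∃ w : H.Walk a z, w.length ≤ n}

lemma walkNbhd_mono : Monotone (walkNbhd H A) :=
  fun _ _ hnm _ ⟨a, ha, w, hw⟩ => ⟨a, ha, w, hw.trans hnm⟩

lemma finite_walkNbhd (hH : LocallyFinite' H) (hA : A.Finite) (n : ℕ) :
    (walkNbhd H A n).Finite := by
  induction n with
  | zero =>
      refine hA.subset fun z ⟨a, ha, w, hw⟩ => ?_
      rwa [← Walk.eq_of_length_eq_zero (Nat.le_zero.1 hw)]
  | succ n ih =>
      refine (ih.union (ih.biUnion fun x _ => hH x)).subset fun z ⟨a, ha, w, hw⟩ => ?_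
      by_cases hwn : w.length ≤ n
      · exact Or.inl ⟨a, ha, w, hwn⟩
      · have hnil : ¬ w.Nil := fun h => hwn (by rw [Walk.length_eq_zero_iff.2 h]; omega)
        refine Or.inr (Set.mem_biUnion ⟨a, ha, w.dropLast, ?_⟩ (w.adj_penultimate hnil))
        rw [Walk.length_dropLast]
        omega

noncomputable def nbhdEdges (hH : LocallyFinite' H) (hA : A.Finite) (n : ℕ) :
    Finset H.edgeSet :=
  (finite_walkNbhd hH hA n).toFinset.sym2.subtype (· ∈ H.edgeSet)

variable {hH : LocallyFinite' H} {hA : A.Finite}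

lemma mem_nbhdEdges {n : ℕ} {f : H.edgeSet} :
    f ∈ nbhdEdges hH hA n ↔ ∀ z ∈ (f : Sym2 W), z ∈ walkNbhd H A n := by
  simp [nbhdEdges, Finset.mem_sym2_iff]

lemma nbhdEdges_mono : Monotone (nbhdEdges hH hA) := fun _ _ hnm _ hf =>
  mem_nbhdEdges.2 fun z hz => walkNbhd_mono hnm (mem_nbhdEdges.1 hf z hz)

lemma monotone_piecewise_nbhdEdges_mem_connectedEvent (B : Set W) :
    Monotone fun n =>
      {ω | ((nbhdEdges hH hA n).piecewise ω fun _ => false) ∈ connectedEvent H A B} :=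
  fun _ _ hnm _ => connectedEvent_mono fun _ hf =>
    let ⟨hfn, hωf⟩ := piecewise_false_eq_true.1 hf
    piecewise_false_eq_true.2 ⟨nbhdEdges_mono hnm hfn, hωf⟩

lemma connectedEvent_eq_iUnion (B : Set W) :
    connectedEvent H A B =
      ⋃ n, {ω | ((nbhdEdges hH hA n).piecewise ω fun _ => false) ∈ connectedEvent H A B} := by
  refine subset_antisymm ?_ (Set.iUnion_subset fun n ω =>
    connectedEvent_mono fun _ hf => (piecewise_false_eq_true.1 hf).2)
  rintro ω ⟨a, ha, b, hb, ⟨w⟩⟩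
  refine Set.mem_iUnion.2 ⟨w.length, a, ha, b, hb, reachable_openGraph_of_walk
      (S := walkNbhd H A w.length) (fun f hf hωf => ?_) w fun z hz => ?_⟩
  · exact piecewise_false_eq_true.2 ⟨mem_nbhdEdges.2 hf, hωf⟩
  · refine ⟨a, ha, (w.takeUntil z hz).mapLe (openGraph_le ω), ?_⟩
    rw [Walk.length_mapLe]
    exact w.length_takeUntil_le_length hz

end Exhaustion

theorem connection_prob_mono_of_weakCover_general {V W : Type*}
    (G : SimpleGraph V) (H : SimpleGraph W)
    (hGconn : G.Connected) (hHconn : H.Connected)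
    (hHlf : LocallyFinite' H)
    (π : V → W) (hπ : IsWeakCover G H π) :
    ∀ p : ℝ, 0 ≤ p → p ≤ 1 → ∀ A B : Set W, A.Finite → B.Finite →
      ∀ (μG : Measure (G.edgeSet → Bool)) (μH : Measure (H.edgeSet → Bool)),
        IsBernoulliProduct p μG → IsBernoulliProduct p μH →
        μH (connectedEvent H A B) ≤
          μG (connectedEvent G (π ⁻¹' A) (π ⁻¹' B)) := by
  intro p _ _ A B hA _ μG μH hμG hμH
  have : Nonempty V := hGconn.nonempty
  have hsurj := hπ.surjective_s19 hHconn.preconnected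
  rw [connectedEvent_eq_iUnion (hH := hHlf) (hA := hA) B,
    (monotone_piecewise_nbhdEdges_mem_connectedEvent B).measure_iUnion]
  exact iSup_le fun n => hπ.measure_piecewise_mem_connectedEvent_le hsurj _ A B hμG hμH

/-- **Lemma (monotonicity of connection probabilities under weak covering maps).**
If `π` is a weak covering map, then for every `p ∈ [0,1]` and all finite
`A, B ⊆ V(H)`, one has `P_p[π⁻¹(A) ↔ π⁻¹(B)] ≥ P_p[A ↔ B]`. -/
theorem connection_prob_mono_of_weakCover {V W : Type*}
    (G : SimpleGraph V) (H : SimpleGraph W)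
    (hGconn : G.Connected) (hHconn : H.Connected)
    (hGlf : LocallyFinite' G) (hHlf : LocallyFinite' H)
    (π : V → W) (hπ : IsWeakCover G H π) :
    ∀ p : ℝ, 0 ≤ p → p ≤ 1 → ∀ A B : Set W, A.Finite → B.Finite →
      ∀ (μG : Measure (G.edgeSet → Bool)) (μH : Measure (H.edgeSet → Bool)),
        IsBernoulliProduct p μG → IsBernoulliProduct p μH →
        μH (connectedEvent H A B) ≤
          μG (connectedEvent G (π ⁻¹' A) (π ⁻¹' B)) :=
  connection_prob_mono_of_weakCover_general G H hGconn hHconn hHlf π hπ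

end Percolation
end
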